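/- arXiv:2309.02758 — 2 statements merged into one kernel-verified Lean document; each statement's English description precedes it below -/
import Mathlib

section
/- Let S be a commutative semiring and let M be an S-semimodule of finite length. Then every injective S-linear endomorphism α : M → M is surjective. -/
/-!
A strictly descending chain of subsemimodules yields strict chains of every finite length, so a
semimodule of finite length is Artinian. If `α` is injective but not surjective, the ranges of its
powers `α ^ n` form a strictly descending chain.
-/

/-- The length of an `S`-semimodule `M`: the supremum of all `r : ℕ` such that there exists a
strictly increasing chain `M₀ ⊊ M₁ ⊊ ⋯ ⊊ M_r` of subsemimodules (i.e. `S`-submodules) of `M`. -/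
noncomputable def semimoduleLength (S M : Type*) [Semiring S] [AddCommMonoid M]
    [Module S M] : ℕ∞ :=
  ⨆ r : {r : ℕ // ∃ c : Fin (r + 1) → Submodule S M, StrictMono c}, ((r : ℕ) : ℕ∞)

section

variable {S M : Type*} [Semiring S] [AddCommMonoid M] [Module S M]

theorem le_semimoduleLength {r : ℕ} {c : Fin (r + 1) → Submodule S M} (hc : StrictMono c) :
    (r : ℕ∞) ≤ semimoduleLength S M :=
  le_iSup (fun s : {r : ℕ // ∃ c : Fin (r + 1) → Submodule S M, StrictMono c} => ((s : ℕ) : ℕ∞))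
    ⟨r, c, hc⟩

theorem semimoduleLength_eq_top_of_strictAnti {f : ℕ → Submodule S M} (hf : StrictAnti f) :
    semimoduleLength S M = ⊤ :=
  ENat.eq_top_iff_forall_ge.mpr fun r =>
    le_semimoduleLength (c := fun i : Fin (r + 1) => f (r - i)) fun i j hij => hf (by omega)

theorem isArtinian_of_semimoduleLength_ne_top (h : semimoduleLength S M ≠ ⊤) :
    IsArtinian S M := by
  refine ⟨wellFounded_iff_isEmpty_descending_chain.mpr ⟨fun ⟨f, hf⟩ => h ?_⟩⟩
  exact semimoduleLength_eq_top_of_strictAnti (strictAnti_nat_of_succ_lt hf)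

end

/-- Over a commutative semiring, every injective endomorphism of a finite-length semimodule is
surjective. -/
theorem surjective_of_injective {S : Type*} [CommSemiring S]
    {M : Type*} [AddCommMonoid M] [Module S M] (hM : semimoduleLength S M ≠ ⊤)
    (α : M →ₗ[S] M) (hα : Function.Injective α) : Function.Surjective α :=
  have := isArtinian_of_semimoduleLength_ne_top hM
  IsArtinian.surjective_of_injective_endomorphism α hα
end

section
/- Let Σ be a (possibly infinite) alphabet, S a commutative semiring, and L : Σ* → S a weighted language with linear representation (Q, in, out, μ) such that the free semimodule S^Q has finite length N = ℓ(S^Q). If there exist words a, b, c ∈ Σ* such that a b^N c ∈ supp L, then a b^k c ∈ supp L for infinitely many k ∈ ℕ. -/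
/-!
The row vectors `vₖ = fin ⬝ μ(a bᵏ)` form an orbit of the linear map `u ↦ u ⬝ μ(b)` on `S^Q`.
The spans `Wₖ` of the tails `{vₘ | m ≥ k}` form a decreasing chain of subsemimodules, so finite
length `N` forces `W_{j+1} = W_j` for some `j ≤ N`; since the map sends `Wₖ` onto `W_{k+1}`, the
chain is constant from `j` on, and `v_N ∈ W_N ⊆ W_j` lies in every tail span. If only finitely
many `a bᵏ c` were in the support, the functional `u ↦ u ⬝ μ(c) ⬝ out` would vanish on some tail,
hence on its span, hence on `v_N`.
-/

open Set Submodule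
open scoped Matrix

section Length

variable {S M : Type*} [Semiring S] [AddCommMonoid M] [Module S M]

theorem le_semimoduleLength_of_strictMono {r : ℕ} (c : Fin (r + 1) → Submodule S M)
    (hc : StrictMono c) : (r : ℕ∞) ≤ semimoduleLength S M :=
  le_iSup (fun r : {r : ℕ // ∃ c : Fin (r + 1) → Submodule S M, StrictMono c} => ((r : ℕ) : ℕ∞))
    ⟨r, c, hc⟩

theorem exists_succ_eq_of_antitone_of_semimoduleLength_ne_top
    (hlen : semimoduleLength S M ≠ ⊤) {W : ℕ → Submodule S M} (hW : Antitone W) :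
    ∃ j ≤ (semimoduleLength S M).toNat, W (j + 1) = W j := by
  set N := (semimoduleLength S M).toNat
  by_contra! hne
  -- Reversing `W 0 ⊋ ⋯ ⊋ W (N + 1)` gives a chain of length `N + 1`.
  have hchain : StrictMono fun i : Fin (N + 2) => W (N + 1 - i) := by
    refine Fin.strictMono_iff_lt_succ.2 fun i => ?_
    have hi : (i : ℕ) ≤ N := Nat.lt_succ_iff.mp i.isLt
    simp only [Fin.val_castSucc, Fin.val_succ,
      show N + 1 - ((i : ℕ) + 1) = N - i by omega, show N + 1 - (i : ℕ) = N - i + 1 by omega]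
    exact (hW (Nat.le_succ _)).lt_of_ne (hne _ (Nat.sub_le _ _))
  have := le_semimoduleLength_of_strictMono _ hchain
  rw [← ENat.natCast_toNat hlen, Nat.cast_le] at this
  omega

end Length

section Orbit

variable {S M P : Type*} [Semiring S] [AddCommMonoid M] [Module S M] [AddCommMonoid P]
  [Module S P]

variable (S) in
def tailSpan (v : ℕ → M) (k : ℕ) : Submodule S M :=
  span S (v '' Ici k)

theorem tailSpan_antitone (v : ℕ → M) : Antitone (tailSpan S v) :=
  fun _ _ h => span_mono (image_mono (Ici_subset_Ici.2 h))

theorem mem_tailSpan {v : ℕ → M} {k m : ℕ} (h : k ≤ m) : v m ∈ tailSpan S v k :=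
  subset_span ⟨m, h, rfl⟩

theorem map_tailSpan {T : M →ₗ[S] M} {v : ℕ → M} (hv : ∀ k, v (k + 1) = T (v k)) (k : ℕ) :
    (tailSpan S v k).map T = tailSpan S v (k + 1) := by
  rw [tailSpan, tailSpan, map_span, ← image_comp]
  congr 1
  ext x
  constructor
  · rintro ⟨m, hm, rfl⟩
    exact ⟨m + 1, Nat.succ_le_succ hm, hv m⟩
  · rintro ⟨m, hm, rfl⟩
    obtain ⟨m, rfl⟩ := Nat.exists_eq_add_of_le' (Nat.one_le_of_lt hm)
    exact ⟨m, Nat.le_of_succ_le_succ hm, (hv m).symm⟩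

theorem tailSpan_eq_of_succ_eq {T : M →ₗ[S] M} {v : ℕ → M} (hv : ∀ k, v (k + 1) = T (v k))
    {j : ℕ} (hj : tailSpan S v (j + 1) = tailSpan S v j) {k : ℕ} (hk : j ≤ k) :
    tailSpan S v k = tailSpan S v j := by
  induction k, hk using Nat.le_induction with
  | base => rfl
  | succ k _ ih => rw [← map_tailSpan hv, ih, map_tailSpan hv, hj]

theorem infinite_setOf_apply_ne_zero_of_orbit (hlen : semimoduleLength S M ≠ ⊤)
    {T : M →ₗ[S] M} {v : ℕ → M} (hv : ∀ k, v (k + 1) = T (v k)) (f : M →ₗ[S] P)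
    (hf : f (v (semimoduleLength S M).toNat) ≠ 0) : {k | f (v k) ≠ 0}.Infinite := by
  set N := (semimoduleLength S M).toNat
  obtain ⟨j, hjN, hj⟩ :=
    exists_succ_eq_of_antitone_of_semimoduleLength_ne_top hlen (tailSpan_antitone (S := S) v)
  have hvN : ∀ k, j ≤ k → v N ∈ tailSpan S v k := fun k hk => by
    rw [tailSpan_eq_of_succ_eq hv hj hk]
    exact tailSpan_antitone v hjN (mem_tailSpan le_rfl)
  refine infinite_of_forall_exists_gt fun K => ?_
  by_contra! hzero
  have hker : tailSpan S v (K + 1) ≤ LinearMap.ker f := span_le.2 <| by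
    rintro _ ⟨m, hm, rfl⟩
    by_contra hm'
    exact absurd (hzero m hm') (Nat.not_le.2 hm)
  exact hf <| hker <| tailSpan_antitone v (le_max_left (K + 1) j) (hvN _ (le_max_right _ _))

end Orbit

/-- Pumping lemma over a possibly infinite alphabet: if `L` has a linear representation
`(Q, fin, fout, μ)` with `S^Q` of finite length `N`, and `a b^N c ∈ supp L`, then
`a b^k c ∈ supp L` for infinitely many `k`. -/
theorem weighted_pumping_infinite_alphabet {A : Type*} {S : Type*} [CommSemiring S]
    {Q : Type*} [Fintype Q] [DecidableEq Q]
    (fin fout : Q → S) (μ : FreeMonoid A →* Matrix Q Q S) (L : FreeMonoid A → S)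
    (hrep : ∀ w, L w = dotProduct (Matrix.vecMul fin (μ w)) fout)
    (hlen : semimoduleLength S (Q → S) ≠ ⊤)
    (a b c : FreeMonoid A)
    (hw : L (a * b ^ (semimoduleLength S (Q → S)).toNat * c) ≠ 0) :
    {k : ℕ | L (a * b ^ k * c) ≠ 0}.Infinite := by
  set v : ℕ → Q → S := fun k => fin ᵥ* μ (a * b ^ k)
  have hv : ∀ k, v (k + 1) = (μ b).vecMulLinear (v k) := fun k => by
    simp only [v, Matrix.vecMulLinear_apply, Matrix.vecMul_vecMul, pow_succ, ← mul_assoc,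
      map_mul]
  set f : (Q → S) →ₗ[S] S := (dotProductBilin S S).flip fout ∘ₗ (μ c).vecMulLinear
  have hfv : ∀ k, f (v k) = L (a * b ^ k * c) := fun k => by
    rw [hrep, map_mul, ← Matrix.vecMul_vecMul]
    rfl
  simp only [← hfv] at hw ⊢
  exact infinite_setOf_apply_ne_zero_of_orbit hlen hv f hw
end
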